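/- Every basis vector e_Θ is an eigenvector of the squared angular momentum M² = M₁² + M₂² + M₃²: M² e_Θ = 0 if θ₁ = θ₂ = θ₃, and M² e_Θ = 2 e_Θ otherwise. Hence each state e_Θ carries angular momentum 0 or 1. -/

import Mathlib

open scoped BigOperators
open Finset

/-- Index set: triples Θ = (θ₁,θ₂,θ₃) with θᵢ ∈ {0,1}. -/
abbrev WIdx := Fin 3 → Fin 2

/-- The 8-dimensional state space V = EuclideanSpace ℂ ({0,1}³). -/
abbrev WV := EuclideanSpace ℂ WIdx

/-- Orthonormal basis vector e_Θ. -/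
noncomputable def eV (Θ : WIdx) : WV := EuclideanSpace.single Θ 1

/-- The basis (e_Θ)_Θ of V, as a `Basis`. -/
noncomputable def bV : Module.Basis WIdx ℂ WV := (EuclideanSpace.basisFun WIdx ℂ).toBasis

/-- q(Θ) = θ₁ + θ₂ + θ₃. -/
def qv (Θ : WIdx) : ℕ := ∑ j, (Θ j : ℕ)

/-- Sign factor (−1)^(θ₁ + ⋯ + θ_{i−1}). -/
def sgnBelow (i : Fin 3) (Θ : WIdx) : ℂ :=
  (-1 : ℂ) ^ (∑ j : Fin 3, if (j : ℕ) < (i : ℕ) then (Θ j : ℕ) else 0)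

/-- Sign factor (−1)^(θ₁ + ⋯ + θ_i). -/
def sgnUpTo (i : Fin 3) (Θ : WIdx) : ℂ :=
  (-1 : ℂ) ^ (∑ j : Fin 3, if (j : ℕ) ≤ (i : ℕ) then (Θ j : ℕ) else 0)

/-- A_i⁻ e_Θ = θ_i (−1)^(θ₁+⋯+θ_{i−1}) √(p−q(Θ)+1) e_{Θ[θ_i↦0]}. -/
noncomputable def Aminus (p : ℕ) (i : Fin 3) : WV →ₗ[ℂ] WV :=
  bV.constr ℂ fun Θ =>
    (((Θ i : ℕ) : ℂ) * sgnBelow i Θ *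
      ((Real.sqrt ((p : ℝ) - (qv Θ : ℝ) + 1) : ℝ) : ℂ)) • eV (Function.update Θ i 0)

/-- A_i⁺ e_Θ = (1−θ_i) (−1)^(θ₁+⋯+θ_{i−1}) √(p−q(Θ)) e_{Θ[θ_i↦1]}. -/
noncomputable def Aplus (p : ℕ) (i : Fin 3) : WV →ₗ[ℂ] WV :=
  bV.constr ℂ fun Θ =>
    (((1 : ℂ) - ((Θ i : ℕ) : ℂ)) * sgnBelow i Θ *
      ((Real.sqrt ((p : ℝ) - (qv Θ : ℝ)) : ℝ) : ℂ)) • eV (Function.update Θ i 1)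

/-- Anticommutator {X,Y} = XY + YX. -/
noncomputable def acommOp (X Y : WV →ₗ[ℂ] WV) : WV →ₗ[ℂ] WV := X ∘ₗ Y + Y ∘ₗ X

/-- Commutator [X,Y] = XY − YX. -/
noncomputable def commOp (X Y : WV →ₗ[ℂ] WV) : WV →ₗ[ℂ] WV := X ∘ₗ Y - Y ∘ₗ X

/-- Dimensionless Hamiltonian ĥ = Σᵢ {A_i⁺, A_i⁻}. -/
noncomputable def hOp (p : ℕ) : WV →ₗ[ℂ] WV := ∑ i, acommOp (Aplus p i) (Aminus p i)

/-- Position operator r̂_k(t) = e^{−it} A_k⁺ + e^{it} A_k⁻. -/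
noncomputable def rOp (p : ℕ) (k : Fin 3) (t : ℝ) : WV →ₗ[ℂ] WV :=
  Complex.exp (-(t : ℂ) * Complex.I) • Aplus p k +
    Complex.exp ((t : ℂ) * Complex.I) • Aminus p k

/-- Momentum operator p̂_k(t) = −i (e^{−it} A_k⁺ − e^{it} A_k⁻). -/
noncomputable def pOp (p : ℕ) (k : Fin 3) (t : ℝ) : WV →ₗ[ℂ] WV :=
  (-Complex.I) • (Complex.exp (-(t : ℂ) * Complex.I) • Aplus p k -
    Complex.exp ((t : ℂ) * Complex.I) • Aminus p k)

/-- Levi-Civita symbol ε_{jkl} with ε_{123} = 1 (indices 0,1,2 here). -/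
def eps (j k l : Fin 3) : ℂ :=
  if (j, k, l) = (0, 1, 2) ∨ (j, k, l) = (1, 2, 0) ∨ (j, k, l) = (2, 0, 1) then 1
  else if (j, k, l) = (2, 1, 0) ∨ (j, k, l) = (1, 0, 2) ∨ (j, k, l) = (0, 2, 1) then -1
  else 0

/-- Angular momentum M_j = −i Σ_{k,l} ε_{jkl} {A_k⁺, A_l⁻}. -/
noncomputable def Mop (p : ℕ) (j : Fin 3) : WV →ₗ[ℂ] WV :=
  (-Complex.I) • ∑ k, ∑ l, eps j k l • acommOp (Aplus p k) (Aminus p l)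

/-- Eigenvectors v_k(Θ,t) of the position operator r̂_k(t). -/
noncomputable def vVec (k : Fin 3) (t : ℝ) (Θ : WIdx) : WV :=
  (((Real.sqrt 2)⁻¹ : ℝ) : ℂ) •
    (eV (Function.update Θ k 0) +
      (sgnUpTo k Θ * Complex.exp (-(t : ℂ) * Complex.I)) • eV (Function.update Θ k 1))

/-- Eigenvectors ṽ_k(Θ,t) of the momentum operator p̂_k(t). -/
noncomputable def vTilde (k : Fin 3) (t : ℝ) (Θ : WIdx) : WV :=
  (((Real.sqrt 2)⁻¹ : ℝ) : ℂ) •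
    (eV (Function.update Θ k 0) -
      (Complex.I * sgnUpTo k Θ * Complex.exp (-(t : ℂ) * Complex.I)) • eV (Function.update Θ k 1))

/-- The non-stationary state z = (1/√2)(e_{(0,0,0)} + e_{(0,0,1)}). -/
noncomputable def zState : WV :=
  (((Real.sqrt 2)⁻¹ : ℝ) : ℂ) • (eV ![0, 0, 0] + eV ![0, 0, 1])

/-- The state x₁ = (1/√2)(e_{(0,1,0)} + e_{(1,1,0)}). -/
noncomputable def x1State : WV :=
  (((Real.sqrt 2)⁻¹ : ℝ) : ℂ) • (eV ![0, 1, 0] + eV ![1, 1, 0])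

local notation "⟪" x ", " y "⟫" => @inner ℂ _ _ x y

/-! The operators A_l⁻ and A_k⁺ are the Jordan–Wigner fermion operators c_l and c_k† rescaled by
√(p − q + 1) and √(p − q). For k ≠ l the anticommutation relation {c_k†, c_l} = 0 therefore gives
{A_k⁺, A_l⁻} = ((p − q + 1) − (p − q)) c_k† c_l = c_k† c_l, so M_j is the p-independent generator
−i (c_a† c_b − c_b† c_a), where (j, a, b) is a cyclic permutation of (0, 1, 2). On e_Θ its square is
c_a† c_b c_b† c_a + c_b† c_a c_a† c_b, i.e. 1 if θ_a ≠ θ_b and 0 otherwise, since c_b annihilates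
c_a† c_b e_Θ. Three bits have either no or exactly two unequal cyclic pairs. -/

open Function

lemma bV_apply (Θ : WIdx) : bV Θ = eV Θ := by
  simp [bV, eV, EuclideanSpace.basisFun_apply]

lemma qv_le_three (Θ : WIdx) : qv Θ ≤ 3 := by
  simp only [qv, Fin.sum_univ_three]
  have := (Θ 0).is_le; have := (Θ 1).is_le; have := (Θ 2).is_le
  omega

lemma qv_update (Θ : WIdx) (i : Fin 3) (c : Fin 2) :
    (qv (update Θ i c) : ℝ) = qv Θ - Θ i + c := by
  have h (Φ : WIdx) : qv Φ = Φ i + ∑ j ∈ univ.erase i, (Φ j : ℕ) :=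
    (add_sum_erase _ _ (mem_univ i)).symm
  rw [h, h Θ, update_self, sum_congr rfl fun j hj => by rw [update_of_ne (ne_of_mem_erase hj)]]
  push_cast; ring

lemma sgnBelow_update_of_le {i j : Fin 3} (h : i ≤ j) (Θ : WIdx) (c : Fin 2) :
    sgnBelow i (update Θ j c) = sgnBelow i Θ := by
  unfold sgnBelow
  congr 1
  refine Finset.sum_congr rfl fun m _ => ?_
  split_ifs with hm
  · rw [update_of_ne (Fin.ne_of_lt (lt_of_lt_of_le hm h))]
  · rfl

@[simp] lemma sgnBelow_update_self (i : Fin 3) (Θ : WIdx) (c : Fin 2) :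
    sgnBelow i (update Θ i c) = sgnBelow i Θ :=
  sgnBelow_update_of_le le_rfl Θ c

lemma sgnBelow_update_of_lt_of_ne {i j : Fin 3} (h : j < i) (Θ : WIdx) {c : Fin 2} (hc : c ≠ Θ j) :
    sgnBelow i (update Θ j c) = -sgnBelow i Θ := by
  let g : Fin 3 → ℕ := fun m => if (m : ℕ) < i then (Θ m : ℕ) else 0
  have hsum : (∑ m : Fin 3, if (m : ℕ) < i then (update Θ j c m : ℕ) else 0) =
      c + ∑ m ∈ univ.erase j, g m := by
    rw [← sdiff_singleton_eq_erase, ← sum_update_of_mem (mem_univ j)]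
    refine sum_congr rfl fun m _ => ?_
    rcases eq_or_ne m j with rfl | hm
    · simp [h]
    · simp [update_of_ne hm, g]
  have hgj : g j = Θ j := if_pos h
  rw [sgnBelow, sgnBelow, hsum, ← add_sum_erase univ g (mem_univ j), hgj, pow_add, pow_add]
  rcases Fin.exists_fin_two.mp ⟨c, rfl⟩ with rfl | rfl <;>
    rcases Fin.exists_fin_two.mp ⟨Θ j, rfl⟩ with h' | h' <;> simp_all

lemma sgnBelow_mul_self (i : Fin 3) (Θ : WIdx) : sgnBelow i Θ * sgnBelow i Θ = 1 := by
  rw [sgnBelow, ← pow_add, ← two_mul, pow_mul]; norm_num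

lemma sum_eps_smul {M : Type*} [AddCommGroup M] [Module ℂ M] (j : Fin 3) (X : Fin 3 → Fin 3 → M) :
    ∑ k, ∑ l, eps j k l • X k l = X (j + 1) (j + 2) - X (j + 2) (j + 1) := by
  fin_cases j <;> simp [Fin.sum_univ_three, eps, sub_eq_add_neg, add_comm]

-- The Jordan–Wigner fermion operators c_i and c_i†: A_i⁻ and A_i⁺ without their square roots.
noncomputable def annOp (i : Fin 3) : WV →ₗ[ℂ] WV :=
  bV.constr ℂ fun Θ => if Θ i = 1 then sgnBelow i Θ • eV (update Θ i 0) else 0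

noncomputable def creOp (i : Fin 3) : WV →ₗ[ℂ] WV :=
  bV.constr ℂ fun Θ => if Θ i = 0 then sgnBelow i Θ • eV (update Θ i 1) else 0

lemma annOp_eV (i : Fin 3) (Θ : WIdx) :
    annOp i (eV Θ) = if Θ i = 1 then sgnBelow i Θ • eV (update Θ i 0) else 0 := by
  rw [← bV_apply, annOp, Module.Basis.constr_basis]

lemma creOp_eV (i : Fin 3) (Θ : WIdx) :
    creOp i (eV Θ) = if Θ i = 0 then sgnBelow i Θ • eV (update Θ i 1) else 0 := by
  rw [← bV_apply, creOp, Module.Basis.constr_basis]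

lemma creOp_annOp_eV_of_eq_one {i : Fin 3} {Θ : WIdx} (h : Θ i = 1) :
    creOp i (annOp i (eV Θ)) = eV Θ := by
  rw [annOp_eV, if_pos h, map_smul, creOp_eV, if_pos (update_self i 0 Θ), update_idem,
    show update Θ i 1 = Θ from update_eq_self_iff.mpr h.symm, sgnBelow_update_self, smul_smul,
    sgnBelow_mul_self, one_smul]

lemma annOp_creOp_eV_of_eq_zero {i : Fin 3} {Θ : WIdx} (h : Θ i = 0) :
    annOp i (creOp i (eV Θ)) = eV Θ := by
  rw [creOp_eV, if_pos h, map_smul, annOp_eV, if_pos (update_self i 1 Θ), update_idem,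
    show update Θ i 0 = Θ from update_eq_self_iff.mpr h.symm, sgnBelow_update_self, smul_smul,
    sgnBelow_mul_self, one_smul]

lemma acommOp_creOp_annOp {k l : Fin 3} (hkl : k ≠ l) : acommOp (creOp k) (annOp l) = 0 := by
  refine bV.ext fun Θ => ?_
  rw [bV_apply, acommOp, LinearMap.add_apply, LinearMap.comp_apply, LinearMap.comp_apply,
    LinearMap.zero_apply]
  by_cases hl : Θ l = 1 <;> by_cases hk : Θ k = 0
  · simp only [annOp_eV, creOp_eV, hl, hk, update_of_ne hkl, update_of_ne hkl.symm, if_true,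
      map_smul, smul_smul, update_comm hkl, ← add_smul]
    rcases hkl.lt_or_gt with h | h <;>
      rw [sgnBelow_update_of_le h.le, sgnBelow_update_of_lt_of_ne h _ (by simp [hk, hl])] <;>
      simp [mul_comm]
  all_goals simp [annOp_eV, creOp_eV, hl, hk, update_of_ne hkl, update_of_ne hkl.symm]

lemma creOp_annOp_creOp_annOp_eV {a b : Fin 3} (hab : a ≠ b) (Θ : WIdx) :
    creOp a (annOp b (creOp b (annOp a (eV Θ)))) =
      (if Θ a = 1 ∧ Θ b = 0 then 1 else 0 : ℂ) • eV Θ := by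
  by_cases h : Θ a = 1 ∧ Θ b = 0
  · obtain ⟨ha, hb⟩ := h
    have hann : annOp a (eV Θ) = sgnBelow a Θ • eV (update Θ a 0) := by rw [annOp_eV, if_pos ha]
    rw [hann, map_smul, map_smul, map_smul,
      annOp_creOp_eV_of_eq_zero (by rwa [update_of_ne hab.symm]), ← map_smul, ← hann,
      creOp_annOp_eV_of_eq_one ha, if_pos ⟨ha, hb⟩, one_smul]
  · rw [if_neg h, zero_smul]
    by_cases ha : Θ a = 1
    · have hb : Θ b = 1 := by omega
      simp [annOp_eV, creOp_eV, ha, hb, update_of_ne hab.symm]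
    · simp [annOp_eV, ha]

lemma annOp_creOp_annOp_eV {a b : Fin 3} (hab : a ≠ b) (Θ : WIdx) :
    annOp b (creOp a (annOp b (eV Θ))) = 0 := by
  by_cases hb : Θ b = 1 <;> by_cases ha : Θ a = 0 <;>
    simp [annOp_eV, creOp_eV, ha, hb, update_of_ne hab, update_of_ne hab.symm]

lemma Aminus_eV (p : ℕ) (i : Fin 3) (Θ : WIdx) :
    Aminus p i (eV Θ) = (Real.sqrt (p - qv Θ + 1) : ℂ) • annOp i (eV Θ) := by
  rw [← bV_apply, Aminus, Module.Basis.constr_basis, bV_apply, annOp_eV]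
  rcases Fin.exists_fin_two.mp ⟨Θ i, rfl⟩ with h | h <;> simp [h, smul_smul, mul_comm]

lemma Aplus_eV (p : ℕ) (i : Fin 3) (Θ : WIdx) :
    Aplus p i (eV Θ) = (Real.sqrt (p - qv Θ) : ℂ) • creOp i (eV Θ) := by
  rw [← bV_apply, Aplus, Module.Basis.constr_basis, bV_apply, creOp_eV]
  rcases Fin.exists_fin_two.mp ⟨Θ i, rfl⟩ with h | h <;> simp [h, smul_smul, mul_comm]

lemma Aplus_annOp_eV (p : ℕ) (k l : Fin 3) (Θ : WIdx) :
    Aplus p k (annOp l (eV Θ)) = (Real.sqrt (p - qv Θ + 1) : ℂ) • creOp k (annOp l (eV Θ)) := by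
  by_cases hl : Θ l = 1
  · simp only [annOp_eV, hl, if_true, map_smul, Aplus_eV, qv_update, smul_comm (sgnBelow l Θ)]
    congr 3; simp only [Fin.val_one, Fin.val_zero, Nat.cast_one, Nat.cast_zero]; ring
  · simp [annOp_eV, hl]

lemma Aminus_creOp_eV (p : ℕ) (k l : Fin 3) (Θ : WIdx) :
    Aminus p l (creOp k (eV Θ)) = (Real.sqrt (p - qv Θ) : ℂ) • annOp l (creOp k (eV Θ)) := by
  by_cases hk : Θ k = 0
  · simp only [creOp_eV, hk, if_true, map_smul, Aminus_eV, qv_update, smul_comm (sgnBelow k Θ)]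
    congr 3; simp only [Fin.val_one, Fin.val_zero, Nat.cast_one, Nat.cast_zero]; ring
  · simp [creOp_eV, hk]

lemma acommOp_Aplus_Aminus {p : ℕ} (hp : 3 ≤ p) {k l : Fin 3} (hkl : k ≠ l) :
    acommOp (Aplus p k) (Aminus p l) = creOp k ∘ₗ annOp l := by
  refine bV.ext fun Θ => ?_
  have hq : (qv Θ : ℝ) ≤ p := by exact_mod_cast (qv_le_three Θ).trans hp
  have hCAR : annOp l (creOp k (eV Θ)) = -creOp k (annOp l (eV Θ)) :=
    eq_neg_of_add_eq_zero_right congr($(acommOp_creOp_annOp hkl) (eV Θ))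
  rw [bV_apply, acommOp, LinearMap.add_apply, LinearMap.comp_apply, LinearMap.comp_apply,
    Aminus_eV, Aplus_eV, map_smul, map_smul, Aplus_annOp_eV, Aminus_creOp_eV, hCAR, smul_smul,
    smul_smul, ← Complex.ofReal_mul, ← Complex.ofReal_mul, Real.mul_self_sqrt (by linarith),
    Real.mul_self_sqrt (by linarith), LinearMap.comp_apply, smul_neg, ← sub_eq_add_neg, ← sub_smul]
  simp

noncomputable def angOp (a b : Fin 3) : WV →ₗ[ℂ] WV :=
  (-Complex.I) • (creOp a ∘ₗ annOp b - creOp b ∘ₗ annOp a)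

lemma Mop_eq_angOp {p : ℕ} (hp : 3 ≤ p) (j : Fin 3) : Mop p j = angOp (j + 1) (j + 2) := by
  have hne : j + 1 ≠ j + 2 := by simp
  rw [Mop, sum_eps_smul, acommOp_Aplus_Aminus hp hne, acommOp_Aplus_Aminus hp hne.symm, angOp]

lemma angOp_comp_angOp_eV {a b : Fin 3} (hab : a ≠ b) (Θ : WIdx) :
    (angOp a b ∘ₗ angOp a b) (eV Θ) = (if Θ a = Θ b then 0 else 1 : ℂ) • eV Θ := by
  simp only [angOp, LinearMap.comp_apply, LinearMap.smul_apply, LinearMap.sub_apply, map_smul,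
    map_sub, annOp_creOp_annOp_eV hab, annOp_creOp_annOp_eV hab.symm,
    creOp_annOp_creOp_annOp_eV hab, creOp_annOp_creOp_annOp_eV hab.symm, map_zero]
  rcases Fin.exists_fin_two.mp ⟨Θ a, rfl⟩ with ha | ha <;>
    rcases Fin.exists_fin_two.mp ⟨Θ b, rfl⟩ with hb | hb <;> simp [ha, hb, smul_smul]

/-- M² e_Θ = 0 if θ₁ = θ₂ = θ₃, and M² e_Θ = 2 e_Θ otherwise. -/
theorem stmt10 (p : ℕ) (hp : 3 ≤ p) (Θ : WIdx) :
    (∑ j : Fin 3, Mop p j ∘ₗ Mop p j) (eV Θ) =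
      (if Θ 0 = Θ 1 ∧ Θ 1 = Θ 2 then (0 : ℂ) else 2) • eV Θ := by
  have hM (j : Fin 3) :
      (Mop p j ∘ₗ Mop p j) (eV Θ) = (if Θ (j + 1) = Θ (j + 2) then 0 else 1 : ℂ) • eV Θ := by
    rw [Mop_eq_angOp hp]
    exact angOp_comp_angOp_eV (by simp) Θ
  rw [LinearMap.sum_apply, Fin.sum_univ_three, hM 0, hM 1, hM 2, ← add_smul, ← add_smul]
  congr 1
  simp only [Fin.isValue, zero_add, Fin.reduceAdd]
  rcases Fin.exists_fin_two.mp ⟨Θ 0, rfl⟩ with h0 | h0 <;>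
    rcases Fin.exists_fin_two.mp ⟨Θ 1, rfl⟩ with h1 | h1 <;>
    rcases Fin.exists_fin_two.mp ⟨Θ 2, rfl⟩ with h2 | h2 <;> norm_num [h0, h1, h2]
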